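/- Let B be a Blaschke product with zero sequence (a_n), let B_1 ≡ 1 and for n ≥ 2 let B_n be the finite Blaschke product with zeros a_1,…,a_{n-1}, and set g_n(z) = B_n(z)·(1-|a_n|²)^{1/2}/(1 - conj(a_n)·z). Suppose (c_n) is a sequence of complex numbers with ∑_n |c_n|² = M² < ∞ and f(z) = ∑_n c_n g_n(z) for all z ∈ U. Then for every z ∈ U, |f(z)| ≤ M·((1-|B(z)|²)/(1-|z|²))^{1/2}; in particular |f(z)| ≤ M·(1-|z|)^{-1/2} on U. -/

import Mathlib

open Complex MeasureTheory

noncomputable section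

/-- The open unit disc in ℂ. -/
def unitDisc : Set ℂ := {z : ℂ | ‖z‖ < 1}

/-- A single Blaschke factor with zero `a`. -/
def bFactor (a z : ℂ) : ℂ :=
  ((starRingEnd ℂ) a / (‖a‖ : ℂ)) * ((a - z) / (1 - (starRingEnd ℂ) a * z))

/-- The Blaschke product with zeros `a n`. -/
def blaschke (a : ℕ → ℂ) (z : ℂ) : ℂ := ∏' n, bFactor (a n) z

/-- The pseudohyperbolic distance on the unit disc. -/
def pdist (z w : ℂ) : ℝ := ‖(z - w) / (1 - (starRingEnd ℂ) w * z)‖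

/-- The weighted Bergman integral `∬_U |g(z)|^p (1-|z|)^α dA(z)`;
`g ∈ A^p_α` means this is finite. -/
def bergman (g : ℂ → ℂ) (p α : ℝ) : ENNReal :=
  ∫⁻ z in unitDisc, ENNReal.ofReal (‖g z‖ ^ p * (1 - ‖z‖) ^ α)

/-- The finite subproduct `B_n` with zeros `a 0, …, a (n-1)` (`subProd a 0 = 1`). -/
def subProd (a : ℕ → ℂ) (n : ℕ) (z : ℂ) : ℂ := ∏ m ∈ Finset.range n, bFactor (a m) z

/-- The orthonormal basis functions `g_n(z) = B_n(z)·(1-|a_n|²)^{1/2}/(1 - conj(a_n)·z)`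
of the model space `(BH²)^⊥`. -/
def gfun (a : ℕ → ℂ) (n : ℕ) (z : ℂ) : ℂ :=
  subProd a n z * (Real.sqrt (1 - ‖a n‖ ^ 2) : ℂ) / (1 - (starRingEnd ℂ) (a n) * z)

/-!
Each `g_n` is a telescoping piece of the finite Blaschke products: by the identity
`|1 - ā z|² - |a - z|² = (1 - |a|²)(1 - |z|²)` one has
`|g_n(z)|² (1 - |z|²) = |B_n(z)|² - |B_{n+1}(z)|²`, so `∑ |g_n(z)|² = (1 - |B(z)|²)/(1 - |z|²)`.
Cauchy–Schwarz then gives the first bound, and `1 - |B|² ≤ 1 ≤ 1 + |z|` the second.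
-/

open Filter Topology

section CauchySchwarz

variable {ι R : Type*} [SeminormedRing R]

theorem norm_tsum_mul_le_of_hasSum_sq {c g : ι → R} {A B : ℝ} (hA : 0 ≤ A) (hB : 0 ≤ B)
    (hc : HasSum (fun i => ‖c i‖ ^ 2) (A ^ 2)) (hg : HasSum (fun i => ‖g i‖ ^ 2) (B ^ 2)) :
    ‖∑' i, c i * g i‖ ≤ A * B := by
  simp_rw [← Real.rpow_two] at hc hg
  obtain ⟨C, -, hCAB, hC⟩ := Real.inner_le_Lp_mul_Lq_hasSum_of_nonneg Real.HolderConjugate.two_two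
    hA hB (fun i => norm_nonneg (c i)) (fun i => norm_nonneg (g i)) hc hg
  have hle : ∀ i, ‖c i * g i‖ ≤ ‖c i‖ * ‖g i‖ := fun i => norm_mul_le _ _
  have hsum : Summable fun i => ‖c i * g i‖ :=
    hC.summable.of_nonneg_of_le (fun _ => norm_nonneg _) hle
  calc ‖∑' i, c i * g i‖ ≤ ∑' i, ‖c i * g i‖ := norm_tsum_le_tsum_norm hsum
    _ ≤ C := hC.tsum_eq ▸ hsum.tsum_le_tsum hle hC.summable
    _ ≤ A * B := hCAB

end CauchySchwarz

theorem norm_one_sub_conj_mul_sq_sub_norm_sub_sq (a z : ℂ) :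
    ‖1 - starRingEnd ℂ a * z‖ ^ 2 - ‖a - z‖ ^ 2 = (1 - ‖a‖ ^ 2) * (1 - ‖z‖ ^ 2) := by
  simp only [← Complex.normSq_eq_norm_sq, Complex.normSq_apply, Complex.sub_re, Complex.sub_im,
    Complex.mul_re, Complex.mul_im, Complex.one_re, Complex.one_im, Complex.conj_re,
    Complex.conj_im]
  ring

theorem one_sub_norm_le_norm_one_sub_conj_mul {a : ℂ} (ha : ‖a‖ ≤ 1) (z : ℂ) :
    1 - ‖z‖ ≤ ‖1 - starRingEnd ℂ a * z‖ := by
  have hmul : ‖starRingEnd ℂ a * z‖ ≤ ‖z‖ := by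
    rw [norm_mul, Complex.norm_conj]
    exact mul_le_of_le_one_left (norm_nonneg z) ha
  have := norm_sub_norm_le (1 : ℂ) (starRingEnd ℂ a * z)
  rw [norm_one] at this
  linarith

theorem one_sub_conj_mul_ne_zero {a z : ℂ} (ha : ‖a‖ ≤ 1) (hz : ‖z‖ < 1) :
    1 - starRingEnd ℂ a * z ≠ 0 := by
  rw [← norm_pos_iff]
  linarith [one_sub_norm_le_norm_one_sub_conj_mul ha z]

section BlaschkeFactor

variable {a z : ℂ}

theorem norm_bFactor (ha : a ≠ 0) : ‖bFactor a z‖ = ‖a - z‖ / ‖1 - starRingEnd ℂ a * z‖ := by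
  rw [bFactor, norm_mul, norm_div, norm_div, Complex.norm_conj, Complex.norm_real,
    Real.norm_of_nonneg (norm_nonneg a), div_self (norm_ne_zero_iff.mpr ha), one_mul]

theorem bFactor_sub_one (ha : a ≠ 0) (hz : 1 - starRingEnd ℂ a * z ≠ 0) :
    bFactor a z - 1 =
      ((‖a‖ : ℂ) - 1) * ((‖a‖ : ℂ) + starRingEnd ℂ a * z) /
        ((‖a‖ : ℂ) * (1 - starRingEnd ℂ a * z)) := by
  have hconj : starRingEnd ℂ a * a = (‖a‖ : ℂ) ^ 2 := by
    rw [mul_comm, Complex.mul_conj, Complex.normSq_eq_norm_sq, Complex.ofReal_pow]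
  have hnorm : (‖a‖ : ℂ) ≠ 0 := Complex.ofReal_ne_zero.mpr (norm_ne_zero_iff.mpr ha)
  rw [bFactor]
  field_simp
  linear_combination hconj

theorem norm_bFactor_sub_one_le (ha0 : 0 < ‖a‖) (ha1 : ‖a‖ < 1) (hz : ‖z‖ < 1) :
    ‖bFactor a z - 1‖ ≤ (1 - ‖a‖) * ((1 + ‖z‖) / (1 - ‖z‖)) := by
  have ha : a ≠ 0 := norm_pos_iff.mp ha0
  have hden := one_sub_norm_le_norm_one_sub_conj_mul ha1.le z
  have hnum : ‖(‖a‖ : ℂ) + starRingEnd ℂ a * z‖ ≤ ‖a‖ * (1 + ‖z‖) := by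
    calc ‖(‖a‖ : ℂ) + starRingEnd ℂ a * z‖ ≤ ‖(‖a‖ : ℂ)‖ + ‖starRingEnd ℂ a * z‖ := norm_add_le _ _
      _ = ‖a‖ * (1 + ‖z‖) := by
        rw [norm_mul, Complex.norm_conj, Complex.norm_real, Real.norm_of_nonneg ha0.le]; ring
  have hsub : ‖(‖a‖ : ℂ) - 1‖ = 1 - ‖a‖ := by
    rw [← Complex.ofReal_one, ← Complex.ofReal_sub, Complex.norm_real, Real.norm_eq_abs,
      abs_sub_comm, abs_of_pos (by linarith)]
  rw [bFactor_sub_one ha (one_sub_conj_mul_ne_zero ha1.le hz), norm_div, norm_mul, norm_mul,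
    hsub, Complex.norm_real, Real.norm_of_nonneg ha0.le]
  calc (1 - ‖a‖) * ‖(‖a‖ : ℂ) + starRingEnd ℂ a * z‖ / (‖a‖ * ‖1 - starRingEnd ℂ a * z‖)
      ≤ (1 - ‖a‖) * (‖a‖ * (1 + ‖z‖)) / (‖a‖ * (1 - ‖z‖)) := by
        gcongr
    _ = (1 - ‖a‖) * ((1 + ‖z‖) / (1 - ‖z‖)) := by
        field_simp

end BlaschkeFactor

section ModelSpace

variable {a : ℕ → ℂ} {z : ℂ}

theorem subProd_succ (n : ℕ) : subProd a (n + 1) z = subProd a n z * bFactor (a n) z :=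
  Finset.prod_range_succ _ _

theorem tendsto_subProd_blaschke (ha : ∀ n, 0 < ‖a n‖ ∧ ‖a n‖ < 1)
    (hblaschke : Summable fun n => 1 - ‖a n‖) (hz : ‖z‖ < 1) :
    Tendsto (fun N => subProd a N z) atTop (𝓝 (blaschke a z)) := by
  have hsum : Summable fun n => ‖bFactor (a n) z - 1‖ :=
    (hblaschke.mul_right ((1 + ‖z‖) / (1 - ‖z‖))).of_nonneg_of_le (fun _ => norm_nonneg _)
      fun n => norm_bFactor_sub_one_le (ha n).1 (ha n).2 hz
  have hmul : Multipliable fun n => bFactor (a n) z := by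
    simpa using multipliable_one_add_of_summable hsum
  exact hmul.hasProd.tendsto_prod_nat

theorem norm_gfun_sq (ha0 : 0 < ‖a n‖) (ha1 : ‖a n‖ < 1) (hz : ‖z‖ < 1) :
    ‖gfun a n z‖ ^ 2 = (‖subProd a n z‖ ^ 2 - ‖subProd a (n + 1) z‖ ^ 2) / (1 - ‖z‖ ^ 2) := by
  have hden : 0 < ‖1 - starRingEnd ℂ (a n) * z‖ :=
    norm_pos_iff.mpr (one_sub_conj_mul_ne_zero ha1.le hz)
  have hz2 : 0 < 1 - ‖z‖ ^ 2 := by nlinarith [norm_nonneg z]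
  have hsqrt : Real.sqrt (1 - ‖a n‖ ^ 2) ^ 2 = 1 - ‖a n‖ ^ 2 := Real.sq_sqrt (by nlinarith)
  rw [subProd_succ, norm_mul, norm_bFactor (norm_pos_iff.mp ha0),
    gfun, norm_div, norm_mul, Complex.norm_real, Real.norm_of_nonneg (Real.sqrt_nonneg _)]
  field_simp
  linear_combination ‖subProd a n z‖ ^ 2 * (1 - ‖z‖ ^ 2) * hsqrt -
    ‖subProd a n z‖ ^ 2 * norm_one_sub_conj_mul_sq_sub_norm_sub_sq (a n) z

theorem sum_range_norm_gfun_sq (ha : ∀ n, 0 < ‖a n‖ ∧ ‖a n‖ < 1) (hz : ‖z‖ < 1) (N : ℕ) :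
    ∑ n ∈ Finset.range N, ‖gfun a n z‖ ^ 2 = (1 - ‖subProd a N z‖ ^ 2) / (1 - ‖z‖ ^ 2) := by
  simp_rw [norm_gfun_sq (ha _).1 (ha _).2 hz]
  rw [← Finset.sum_div, Finset.sum_range_sub' (fun n => ‖subProd a n z‖ ^ 2)]
  simp [subProd]

theorem hasSum_norm_gfun_sq (ha : ∀ n, 0 < ‖a n‖ ∧ ‖a n‖ < 1)
    (hblaschke : Summable fun n => 1 - ‖a n‖) (hz : ‖z‖ < 1) :
    HasSum (fun n => ‖gfun a n z‖ ^ 2) ((1 - ‖blaschke a z‖ ^ 2) / (1 - ‖z‖ ^ 2)) := by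
  rw [hasSum_iff_tendsto_nat_of_nonneg (fun _ => sq_nonneg _)]
  simp_rw [sum_range_norm_gfun_sq ha hz]
  exact ((tendsto_subProd_blaschke ha hblaschke hz).norm.pow 2).const_sub 1 |>.div_const _

end ModelSpace

theorem one_sub_sq_div_one_sub_sq_le_inv (t : ℝ) {r : ℝ} (hr0 : 0 ≤ r) (hr1 : r < 1) :
    (1 - t ^ 2) / (1 - r ^ 2) ≤ (1 - r)⁻¹ := by
  rw [div_le_iff₀ (by nlinarith), inv_mul_eq_div, le_div_iff₀ (by linarith)]
  nlinarith [sq_nonneg t]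

/-- Pointwise bound for model space functions: if `f = ∑ c_n g_n` with `∑ |c_n|² = M²`,
then `|f(z)| ≤ M·((1-|B(z)|²)/(1-|z|²))^{1/2}` and `|f(z)| ≤ M·(1-|z|)^{-1/2}` on `U`. -/
theorem stmt15 (a : ℕ → ℂ)
    (ha : ∀ n, 0 < ‖a n‖ ∧ ‖a n‖ < 1)
    (hblaschke : Summable (fun n => 1 - ‖a n‖))
    (B : ℂ → ℂ) (hB : ∀ z ∈ unitDisc, B z = blaschke a z)
    (c : ℕ → ℂ) (hc : Summable (fun n => ‖c n‖ ^ 2))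
    (M : ℝ) (hM : 0 ≤ M) (hM2 : (∑' n, ‖c n‖ ^ 2) = M ^ 2)
    (f : ℂ → ℂ) (hf : ∀ z ∈ unitDisc, f z = ∑' n, c n * gfun a n z) :
    ∀ z ∈ unitDisc,
      ‖f z‖ ≤
        M * Real.sqrt ((1 - ‖B z‖ ^ 2) / (1 - ‖z‖ ^ 2)) ∧
      ‖f z‖ ≤ M * (1 - ‖z‖) ^ (-(1 / 2) : ℝ) := by
  intro z hz
  have hz1 : ‖z‖ < 1 := hz
  have hg := hasSum_norm_gfun_sq ha hblaschke hz1
  have hbound : ‖f z‖ ≤ M * Real.sqrt ((1 - ‖B z‖ ^ 2) / (1 - ‖z‖ ^ 2)) := by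
    rw [hf z hz, hB z hz]
    refine norm_tsum_mul_le_of_hasSum_sq hM (Real.sqrt_nonneg _) (hM2 ▸ hc.hasSum) ?_
    rwa [Real.sq_sqrt (hg.nonneg fun _ => sq_nonneg _)]
  refine ⟨hbound, hbound.trans ?_⟩
  rw [Real.rpow_neg (by linarith [norm_nonneg z]), ← Real.sqrt_eq_rpow, ← Real.sqrt_inv]
  gcongr
  exact one_sub_sq_div_one_sub_sq_le_inv _ (norm_nonneg z) hz1
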